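/- arXiv:2503.16330 — 5 statements merged into one kernel-verified Lean document; each statement's English description precedes it below -/
import Mathlib

section
/- Let (a_i)_{i≥1} be a sequence of strictly positive integers which is not ultimately periodic, and set ω = a_1 a_2 a_3 ⋯. Suppose there exist an infinite set 𝒩 ⊆ ℕ and a real C > 0 such that the complexity function satisfies p_ω(n) ≤ Cn for all n ∈ 𝒩. Then ω satisfies condition ♠ with constant c = 3C + 1. -/
open scoped BigOperators

/-- A `p`-adic floor function: values in `ℤ[1/p]`, `‖x - s x‖_p < 1`, `s 0 = 0`,
and `s` is constant on open unit balls. -/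
structure PadicFloor (p : ℕ) [Fact p.Prime] where
  toFun : ℚ_[p] → ℚ_[p]
  zinv : ∀ x, ∃ (m : ℤ) (k : ℕ), toFun x = (m : ℚ_[p]) / (p : ℚ_[p]) ^ k
  norm_sub_lt : ∀ x, ‖x - toFun x‖ < 1
  map_zero' : toFun 0 = 0
  eq_of_close : ∀ x y, ‖x - y‖ < 1 → toFun x = toFun y

/-- `l` is a prefix of the infinite word `ω` (indexed from 0). -/
def IsPrefixOf {A : Type*} (l : List A) (ω : ℕ → A) : Prop :=
  ∀ (i : ℕ) (h : i < l.length), l.get ⟨i, h⟩ = ω i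

/-- `ω` is ultimately periodic. -/
def UltPeriodic {A : Type*} (ω : ℕ → A) : Prop :=
  ∃ N k : ℕ, 0 < k ∧ ∀ n, N ≤ n → ω (n + k) = ω n

/-- Condition ♠ with constant `c`. -/
def Spade {A : Type*} (ω : ℕ → A) (c : ℝ) : Prop :=
  ¬ UltPeriodic ω ∧
  ∃ W U V : ℕ → List A,
    (∀ n, U n ≠ []) ∧
    (∀ n, IsPrefixOf (W n ++ (U n ++ (V n ++ U n))) ω) ∧
    (∀ n, ((V n).length : ℝ) ≤ c * (U n).length) ∧
    (∀ n, ((W n).length : ℝ) ≤ c * (U n).length) ∧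
    (∀ m : ℕ, ∃ n, m < (U n).length)

/-- Condition ♣ with constant `c`. -/
def Club {A : Type*} (ω : ℕ → A) (c : ℝ) : Prop :=
  ¬ UltPeriodic ω ∧
  ∃ W U V : ℕ → List A,
    (∀ n, U n ≠ []) ∧
    (∀ n, IsPrefixOf (W n ++ (U n ++ (V n ++ (U n).reverse))) ω) ∧
    (∀ n, ((V n).length : ℝ) ≤ c * (U n).length) ∧
    (∀ n, ((W n).length : ℝ) ≤ c * (U n).length) ∧
    (∀ m : ℕ, ∃ n, m < (U n).length)

/-- The set of blocks (factors) of length `n` occurring in the infinite word `ω`. -/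
def blockSet {A : Type*} (ω : ℕ → A) (n : ℕ) : Set (List A) :=
  Set.range fun ℓ : ℕ => List.ofFn fun i : Fin n => ω (ℓ + i)

/-- The block of length `n` of `ω` starting at position `ℓ`. -/
def blk {A : Type*} (ω : ℕ → A) (ℓ n : ℕ) : List A :=
  List.ofFn fun i : Fin n => ω (ℓ + i)

lemma blk_length {A : Type*} (ω : ℕ → A) (ℓ n : ℕ) : (blk ω ℓ n).length = n := by
  simp [blk]

lemma blk_mem_blockSet {A : Type*} (ω : ℕ → A) (ℓ n : ℕ) : blk ω ℓ n ∈ blockSet ω n :=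
  ⟨ℓ, rfl⟩

lemma blk_append {A : Type*} (ω : ℕ → A) (ℓ p q : ℕ) :
    blk ω ℓ p ++ blk ω (ℓ + p) q = blk ω ℓ (p + q) := by
  rw [show blk ω ℓ (p+q) = List.ofFn (fun i : Fin (p+q) => ω (ℓ + i)) from rfl,
    List.ofFn_add]
  congr 1 <;>
  · unfold blk
    rw [List.ofFn_inj]
    funext i
    apply congrArg ω
    simp only [Fin.coe_castAdd, Fin.coe_natAdd]
    omega

lemma blk_eq_of_pt {A : Type*} (ω : ℕ → A) (ℓ ℓ' n : ℕ)
    (h : ∀ s, s < n → ω (ℓ + s) = ω (ℓ' + s)) : blk ω ℓ n = blk ω ℓ' n := by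
  unfold blk
  rw [List.ofFn_inj]
  funext s
  exact h s s.isLt

lemma pt_of_blk_eq {A : Type*} (ω : ℕ → A) (ℓ ℓ' n : ℕ)
    (h : blk ω ℓ n = blk ω ℓ' n) : ∀ s, s < n → ω (ℓ + s) = ω (ℓ' + s) := by
  unfold blk at h
  rw [List.ofFn_inj] at h
  intro s hs
  exact congrFun h ⟨s, hs⟩

lemma blk_prefix {A : Type*} (ω : ℕ → A) (N : ℕ) : IsPrefixOf (blk ω 0 N) ω := by
  intro i h
  rw [show (blk ω 0 N).get ⟨i, h⟩ = ω (0 + (⟨i, by simpa [blk_length] using h⟩ : Fin N)) from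
    List.get_ofFn _ _]
  simp

lemma prefix_four {A : Type*} (ω : ℕ → A) (i u v : ℕ) :
    IsPrefixOf (blk ω 0 i ++ (blk ω i u ++ (blk ω (i+u) v ++ blk ω (i+u+v) u))) ω := by
  have h1 : blk ω (i+u) v ++ blk ω (i+u+v) u = blk ω (i+u) (v+u) := blk_append ω (i+u) v u
  have h2 : blk ω i u ++ blk ω (i+u) (v+u) = blk ω i (u+(v+u)) := blk_append ω i u (v+u)
  have h3 : blk ω 0 i ++ blk ω i (u+(v+u)) = blk ω 0 (i+(u+(v+u))) := by
    have := blk_append ω 0 i (u+(v+u))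
    rwa [Nat.zero_add] at this
  rw [h1, h2, h3]
  exact blk_prefix ω _

lemma per_iter {A : Type*} (ω : ℕ → A) (i n t : ℕ)
    (hper : ∀ x, i ≤ x → x < i + n → ω (x + t) = ω x) :
    ∀ m x, i ≤ x → x + m * t < i + n + t → ω (x + m * t) = ω x := by
  intro m
  induction m with
  | zero => intro x _ _; simp
  | succ m ih =>
    intro x hx hlt
    have e : x + (m + 1) * t = (x + m * t) + t := by ring
    have h1 : ω ((x + m * t) + t) = ω (x + m * t) := by
      apply hper (x + m * t) (by omega)
      have : x + (m+1) * t = x + m * t + t := by ring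
      omega
    rw [e, h1]
    exact ih x hx (by nlinarith)

lemma key_lemma (ω : ℕ → ℕ) (𝒩 : Set ℕ) (hinf : 𝒩.Infinite)
    (C : ℝ) (hC : 0 < C)
    (hcomp : ∀ n ∈ 𝒩, (blockSet ω n).Finite ∧
      ((blockSet ω n).ncard : ℝ) ≤ C * n) (m : ℕ) :
    ∃ W U V : List ℕ, U ≠ [] ∧ IsPrefixOf (W ++ (U ++ (V ++ U))) ω ∧
      ((V.length : ℝ) ≤ (3 * C + 1) * U.length) ∧
      ((W.length : ℝ) ≤ (3 * C + 1) * U.length) ∧ m < U.length := by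
  -- pick a large n in 𝒩
  obtain ⟨n, hn𝒩, hnm⟩ := hinf.exists_gt (3 * m + 3)
  obtain ⟨hfin, hcard⟩ := hcomp n hn𝒩
  have hn1 : 1 ≤ n := by omega
  have hCn0 : (0:ℝ) ≤ C * n := by positivity
  -- pigeonhole: two equal blocks at positions i < j ≤ ⌊Cn⌋ + 1
  have hScard : hfin.toFinset.card ≤ Nat.floor (C * n) := by
    rw [← Set.ncard_eq_toFinset_card _ hfin]
    exact Nat.le_floor (by exact_mod_cast hcard)
  obtain ⟨x, hx, y, hy, hxy, hfxy⟩ :=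
    Finset.exists_ne_map_eq_of_card_lt_of_maps_to
      (s := Finset.range (Nat.floor (C * n) + 2)) (t := hfin.toFinset)
      (by rw [Finset.card_range]; omega)
      (fun ℓ _ => by simpa using blk_mem_blockSet ω ℓ n)
  -- normalize to i < j
  obtain ⟨i, j, hij, hjle, hblk⟩ :
      ∃ i j : ℕ, i < j ∧ j ≤ Nat.floor (C * n) + 1 ∧ blk ω i n = blk ω j n := by
    simp only [Finset.mem_range] at hx hy
    rcases lt_or_gt_of_ne hxy with h | h
    · exact ⟨x, y, h, by omega, hfxy⟩
    · exact ⟨y, x, h, by omega, hfxy.symm⟩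
  have hpt := pt_of_blk_eq ω i j n hblk
  have hile : (i : ℝ) ≤ C * n := by
    have : i ≤ Nat.floor (C * n) := by omega
    calc (i:ℝ) ≤ (Nat.floor (C * n) : ℝ) := by exact_mod_cast this
      _ ≤ C * n := Nat.floor_le hCn0
  have hjleR : (j : ℝ) ≤ C * n + 1 := by
    calc (j:ℝ) ≤ ((Nat.floor (C * n) : ℕ) : ℝ) + 1 := by exact_mod_cast hjle
      _ ≤ C * n + 1 := by linarith [Nat.floor_le hCn0]
  have hCC : C * 1 ≤ C * n := by
    apply mul_le_mul_of_nonneg_left _ hC.le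
    exact_mod_cast hn1
  rcases le_or_gt n (j - i) with hcase | hcase
  · -- non-overlapping case
    refine ⟨blk ω 0 i, blk ω i n, blk ω (i + n) (j - i - n), ?_, ?_, ?_, ?_, ?_⟩
    · intro h
      have := congrArg List.length h
      simp [blk_length] at this
      omega
    · have hU2 : blk ω (i + n + (j - i - n)) n = blk ω i n := by
        rw [show i + n + (j - i - n) = j by omega]
        exact hblk.symm
      have := prefix_four ω i n (j - i - n)
      rwa [hU2] at this
    · rw [blk_length, blk_length]
      have h1 : ((j - i - n : ℕ) : ℝ) ≤ (j : ℝ) := by exact_mod_cast Nat.sub_le _ _ |>.trans (Nat.sub_le _ _)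
      have h2 : (1:ℝ) ≤ (n:ℝ) := by exact_mod_cast hn1
      nlinarith
    · rw [blk_length, blk_length]
      have h2 : (1:ℝ) ≤ (n:ℝ) := by exact_mod_cast hn1
      nlinarith
    · rw [blk_length]; omega
  · -- overlapping case: period t = j - i < n
    set t := j - i with ht
    have ht1 : 1 ≤ t := by omega
    set k := (n + t) / (2 * t) with hk
    have hk1 : 1 ≤ k := by
      rw [hk]
      rw [Nat.le_div_iff_mul_le (by omega)]
      omega
    have hdm : 2 * t * k + (n + t) % (2 * t) = n + t := by
      rw [hk]; exact Nat.div_add_mod _ _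
    have hmlt : (n + t) % (2 * t) < 2 * t := Nat.mod_lt _ (by omega)
    set P := k * t with hP
    have h2P : 2 * t * k = 2 * P := by rw [hP]; ring
    have htP : t ≤ P := by rw [hP]; nlinarith
    have hUb : 2 * P ≤ n + t := by omega
    have hlbP : n < 3 * P := by omega
    -- periodicity
    have hper : ∀ x, i ≤ x → x < i + n → ω (x + t) = ω x := by
      intro x hx hxn
      have := hpt (x - i) (by omega)
      rw [show i + (x - i) = x by omega, show j + (x - i) = x + t by omega] at this
      exact this.symm
    have hU2 : blk ω (i + P + 0) P = blk ω i P := by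
      rw [Nat.add_zero]
      apply blk_eq_of_pt
      intro s hs
      have := per_iter ω i n t hper k (i + s) (by omega) (by
        have : s + k * t < 2 * P := by omega
        omega)
      rw [show i + s + k * t = i + P + s by rw [hP]; ring] at this
      exact this
    refine ⟨blk ω 0 i, blk ω i P, [], ?_, ?_, ?_, ?_, ?_⟩
    · intro h
      have := congrArg List.length h
      simp [blk_length] at this
      omega
    · have := prefix_four ω i P 0
      rw [show blk ω (i+P) 0 = [] from rfl] at this
      rwa [hU2] at this
    · simp [blk_length]
      positivity
    · rw [blk_length, blk_length]
      have hn3P : (n : ℝ) ≤ 3 * (P : ℝ) := by exact_mod_cast hlbP.le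
      nlinarith
    · rw [blk_length]; omega

/-- **Theorem (low complexity implies ♠).** Let `(aᵢ)_{i≥1}` be a non ultimately periodic
sequence of strictly positive integers, `ω = a₁a₂a₃⋯`. If there are an infinite set
`𝒩 ⊆ ℕ` and a real `C > 0` with `p_ω(n) ≤ Cn` for all `n ∈ 𝒩`, then `ω` satisfies
condition ♠ with constant `3C + 1`. -/
theorem low_complexity_spade
    (a : ℕ → ℕ) (hpos : ∀ i : ℕ, 1 ≤ i → 0 < a i)
    (hnp : ¬ UltPeriodic (fun i => a (i + 1)))
    (𝒩 : Set ℕ) (hinf : 𝒩.Infinite)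
    (C : ℝ) (hC : 0 < C)
    (hcomp : ∀ n ∈ 𝒩, (blockSet (fun i => a (i + 1)) n).Finite ∧
      ((blockSet (fun i => a (i + 1)) n).ncard : ℝ) ≤ C * n) :
    Spade (fun i => a (i + 1)) (3 * C + 1) := by
  refine ⟨hnp, ?_⟩
  have key := key_lemma (fun i => a (i + 1)) 𝒩 hinf C hC hcomp
  choose W U V h1 h2 h3 h4 h5 using key
  exact ⟨W, U, V, h1, h2, h3, h4, fun m => ⟨m, h5 m⟩⟩
end

section
/- Let a and b be two distinct symbols. The Thue–Morse word on {a, b} satisfies condition ♠ with constant c = 2, and it satisfies condition ♣ with constant c = 0. -/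
open scoped BigOperators

/-- The Thue–Morse word on the alphabet `{a, b}`: the `n`-th letter (indexed from 0) is `a`
iff the number of `1`s in the binary expansion of `n` is even. -/
def thueMorseWord {A : Type*} (a b : A) : ℕ → A :=
  fun n => if ((Nat.digits 2 n).count 1) % 2 = 0 then a else b

/-!
Let `parity n ∈ ZMod 2` be the parity of the binary digit sum of `n`, so that the Thue–Morse word
is `n ↦ if parity n = 0 then a else b`. For `j < 2 ^ k` one has `parity (2 ^ k + j) = parity j + 1`
and `parity (2 ^ k - 1 - j) = parity j + k`. The first identity says that the factors on
`[2 ^ k, 2 ^ (k + 1))` and on `[2 ^ (k + 1), 2 ^ (k + 1) + 2 ^ k)` coincide, which gives ♠ with `W`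
the prefix of length `2 ^ k`; together with the second it makes the prefix of length `2 ^ (m + 1)`
a palindrome for odd `m`, which gives ♣. A period `k` from some point on would give, comparing
positions `2 ^ m` and `2 ^ m - k`, the identity `parity (k - 1) + m = 1` for all large `m`, which
fails for `m` or `m + 1`.
-/

section Words

variable {α : Type*}

lemma isPrefixOf_iff_getElem {l : List α} {ω : ℕ → α} :
    IsPrefixOf l ω ↔ ∀ i (h : i < l.length), l[i] = ω i := Iff.rfl

lemma isPrefixOf_append_iff {l r : List α} {ω : ℕ → α} :
    IsPrefixOf (l ++ r) ω ↔ IsPrefixOf l ω ∧ IsPrefixOf r (fun i => ω (l.length + i)) := by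
  simp only [isPrefixOf_iff_getElem, List.length_append]
  constructor
  · intro h
    refine ⟨fun i hi => ?_, fun i hi => ?_⟩
    · simpa [List.getElem_append_left hi] using h i (by omega)
    · simpa [List.getElem_append_right] using h (l.length + i) (by omega)
  · rintro ⟨hl, hr⟩ i hi
    rw [List.getElem_append]
    split_ifs with h
    · exact hl i h
    · simpa [Nat.add_sub_cancel' (Nat.le_of_not_lt h)] using hr (i - l.length) (by omega)

lemma isPrefixOf_map_range_iff {L : ℕ} {f ω : ℕ → α} :
    IsPrefixOf ((List.range L).map f) ω ↔ ∀ j < L, f j = ω j := by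
  simp [isPrefixOf_iff_getElem]

lemma isPrefixOf_reverse_map_range_iff {L : ℕ} {f ω : ℕ → α} :
    IsPrefixOf ((List.range L).map f).reverse ω ↔ ∀ j < L, f (L - 1 - j) = ω j := by
  simp [isPrefixOf_iff_getElem, List.getElem_reverse]

end Words

namespace ThueMorse

def parity (n : ℕ) : ZMod 2 := ((Nat.digits 2 n).count 1 : ℕ)

lemma parity_two_mul (n : ℕ) : parity (2 * n) = parity n := by
  rcases n.eq_zero_or_pos with rfl | hn
  · rfl
  · simp [parity, Nat.digits_def' one_lt_two (by omega : 0 < 2 * n)]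

lemma parity_two_mul_add_one (n : ℕ) : parity (2 * n + 1) = parity n + 1 := by
  simp [parity, Nat.mul_add_div]

lemma parity_two_pow_add {k j : ℕ} (hj : j < 2 ^ k) : parity (2 ^ k + j) = parity j + 1 := by
  induction k generalizing j with
  | zero =>
    obtain rfl : j = 0 := by omega
    rfl
  | succ k ih =>
    obtain ⟨q, rfl | rfl⟩ := Nat.even_or_odd' j
    · rw [show 2 ^ (k + 1) + 2 * q = 2 * (2 ^ k + q) by ring, parity_two_mul, parity_two_mul,
        ih (by omega)]
    · rw [show 2 ^ (k + 1) + (2 * q + 1) = 2 * (2 ^ k + q) + 1 by ring, parity_two_mul_add_one,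
        parity_two_mul_add_one, ih (by omega)]

lemma parity_two_pow (k : ℕ) : parity (2 ^ k) = 1 := by
  simpa [parity] using parity_two_pow_add (Nat.two_pow_pos k)

lemma parity_two_pow_sub_one_sub {k i : ℕ} (hi : i < 2 ^ k) :
    parity (2 ^ k - 1 - i) = parity i + k := by
  induction k generalizing i with
  | zero =>
    obtain rfl : i = 0 := by omega
    rfl
  | succ k ih =>
    obtain ⟨q, rfl | rfl⟩ := Nat.even_or_odd' i
    · rw [show 2 ^ (k + 1) - 1 - 2 * q = 2 * (2 ^ k - 1 - q) + 1 by omega,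
        parity_two_mul_add_one, parity_two_mul, ih (by omega)]
      push_cast
      ring
    · rw [show 2 ^ (k + 1) - 1 - (2 * q + 1) = 2 * (2 ^ k - 1 - q) by omega, parity_two_mul,
        parity_two_mul_add_one, ih (by omega)]
      push_cast
      ring_nf
      reduce_mod_char

variable {A : Type*} {a b : A}

lemma thueMorseWord_eq_ite (n : ℕ) : thueMorseWord a b n = if parity n = 0 then a else b := by
  simp [thueMorseWord, parity, ZMod.natCast_eq_zero_iff, Nat.dvd_iff_mod_eq_zero]

lemma thueMorseWord_congr {i j : ℕ} (h : parity i = parity j) :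
    thueMorseWord a b i = thueMorseWord a b j := by
  rw [thueMorseWord_eq_ite, thueMorseWord_eq_ite, h]

lemma parity_eq_of_thueMorseWord_eq (hab : a ≠ b) {i j : ℕ}
    (h : thueMorseWord a b i = thueMorseWord a b j) : parity i = parity j := by
  have eq_one_of_ne_zero : ∀ x : ZMod 2, x ≠ 0 → x = 1 := by decide
  rw [thueMorseWord_eq_ite, thueMorseWord_eq_ite] at h
  by_cases hi : parity i = 0 <;> by_cases hj : parity j = 0
  all_goals simp_all [eq_comm]

lemma not_ultPeriodic_thueMorseWord (hab : a ≠ b) : ¬ UltPeriodic (thueMorseWord a b) := by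
  rintro ⟨N, k, hk, hper⟩
  have key : ∀ m : ℕ, N + k ≤ 2 ^ m → parity (k - 1) + m = 1 := by
    intro m hm
    have h := parity_eq_of_thueMorseWord_eq hab (hper (2 ^ m - k) (by omega))
    rw [Nat.sub_add_cancel (by omega), parity_two_pow,
      show 2 ^ m - k = 2 ^ m - 1 - (k - 1) by omega, parity_two_pow_sub_one_sub (by omega)] at h
    exact h.symm
  have hm := Nat.lt_two_pow_self (n := N + k)
  have h1 := key (N + k) hm.le
  have h2 := key (N + k + 1) (by rw [pow_succ]; omega)
  push_cast at h1 h2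
  exact absurd (by linear_combination h2 - h1 : (1 : ZMod 2) = 0) (by decide)

lemma thueMorseWord_two_pow_succ_add {k j : ℕ} (hj : j < 2 ^ k) :
    thueMorseWord a b (2 ^ (k + 1) + j) = thueMorseWord a b (2 ^ k + j) :=
  thueMorseWord_congr <| by
    rw [parity_two_pow_add (hj.trans (Nat.pow_lt_pow_succ one_lt_two)), parity_two_pow_add hj]

lemma thueMorseWord_two_pow_sub_one_sub {m j : ℕ} (hm : Odd m) (hj : j < 2 ^ m) :
    thueMorseWord a b (2 ^ m - 1 - j) = thueMorseWord a b (2 ^ m + j) :=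
  thueMorseWord_congr <| by
    rw [parity_two_pow_sub_one_sub hj, parity_two_pow_add hj, hm.natCast_zmod_two]

theorem spade_thueMorseWord (hab : a ≠ b) : Spade (thueMorseWord a b) 2 := by
  refine ⟨not_ultPeriodic_thueMorseWord hab,
    fun n => (List.range (2 ^ n)).map (thueMorseWord a b),
    fun n => (List.range (2 ^ n)).map (fun j => thueMorseWord a b (2 ^ n + j)),
    fun _ => [], fun _ => by simp, fun n => ?_, fun _ => by simp, fun _ => by simp,
    fun m => ⟨m, by simpa using Nat.lt_two_pow_self⟩⟩
  simp only [List.nil_append, isPrefixOf_append_iff, List.length_map, List.length_range,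
    isPrefixOf_map_range_iff, implies_true, true_and]
  intro j hj
  rw [← add_assoc, ← two_mul, ← pow_succ', thueMorseWord_two_pow_succ_add hj]

theorem club_thueMorseWord (hab : a ≠ b) : Club (thueMorseWord a b) 0 := by
  refine ⟨not_ultPeriodic_thueMorseWord hab, fun _ => [],
    fun n => (List.range (2 ^ (2 * n + 1))).map (thueMorseWord a b),
    fun _ => [], fun _ => by simp, fun n => ?_, fun _ => by simp, fun _ => by simp,
    fun m => ⟨m, ?_⟩⟩
  · simp only [List.nil_append, isPrefixOf_append_iff, List.length_map, List.length_range,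
      isPrefixOf_map_range_iff, isPrefixOf_reverse_map_range_iff, implies_true, true_and]
    exact fun j hj => thueMorseWord_two_pow_sub_one_sub (odd_two_mul_add_one n) hj
  · simpa using Nat.lt_two_pow_self.trans_le (Nat.pow_le_pow_right two_pos (by omega))

end ThueMorse

/-- **Proposition.** The Thue–Morse word satisfies ♠ with constant `2` and ♣ with
constant `0`. -/
theorem thueMorse_spade_and_club {A : Type*} (a b : A) (hab : a ≠ b) :
    Spade (thueMorseWord a b) 2 ∧ Club (thueMorseWord a b) 0 :=
  ⟨ThueMorse.spade_thueMorseWord hab, ThueMorse.club_thueMorseWord hab⟩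
end

section
/- Let a and b be two distinct symbols. The Rudin–Shapiro word on {a, b} satisfies condition ♠ with constant c = 25. -/
open scoped BigOperators

/-- The Rudin–Shapiro word on the alphabet `{a, b}`: the `n`-th letter (indexed from 0) is
`a` iff the number of (possibly overlapping) occurrences of the block `11` in the binary
expansion of `n` is even. -/
def rudinShapiroWord {A : Type*} (a b : A) : ℕ → A := fun n =>
  let d := Nat.digits 2 n
  if ((List.range d.length).filter
      fun i => (d.getD i 0 == 1) && (d.getD (i + 1) 0 == 1)).length % 2 = 0
  then a else b

/-!
Let `c n` be the number of blocks `11` in the binary expansion of `n`. Then `c (2m) = c m` and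
`c (2m + 1) = c m + m % 2`, hence `c (2^(j+1) + i) = c i` for `i < 2^j`: the prefix of length
`2^(j+1)` is followed by a copy of the prefix of length `2^j`, which is a prefix `U V U` with
`|U| = |V| = 2^j` and `W` empty.

The word is not ultimately periodic: `c (4m + 3) = c m + 1 + m % 2` forces every eventual period
to be even, and since the word is invariant under `n ↦ 2n`, half of an eventual period is again
one; this is an infinite descent.
-/

def adjacentOnesCount (d : List ℕ) : ℕ :=
  ((List.range d.length).filter fun i => (d.getD i 0 == 1) && (d.getD (i + 1) 0 == 1)).length

lemma adjacentOnesCount_cons (x : ℕ) (d : List ℕ) :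
    adjacentOnesCount (x :: d) =
      (if x = 1 ∧ d.getD 0 0 = 1 then 1 else 0) + adjacentOnesCount d := by
  unfold adjacentOnesCount
  rw [List.length_cons, List.range_succ_eq_map, List.filter_cons]
  simp only [List.getD_cons_zero, List.getD_cons_succ, List.filter_map, Function.comp_def]
  split <;> split <;> simp_all
  omega

def rudinShapiroCount (n : ℕ) : ℕ := adjacentOnesCount (Nat.digits 2 n)

lemma rudinShapiroCount_two_mul (m : ℕ) : rudinShapiroCount (2 * m) = rudinShapiroCount m := by
  rcases Nat.eq_zero_or_pos m with rfl | hm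
  · rfl
  · rw [rudinShapiroCount, Nat.digits_def' one_lt_two (by omega), adjacentOnesCount_cons]
    simp [rudinShapiroCount]

lemma rudinShapiroCount_two_mul_add_one (m : ℕ) :
    rudinShapiroCount (2 * m + 1) = m % 2 + rudinShapiroCount m := by
  have hlow : (Nat.digits 2 m).getD 0 0 = m % 2 := by
    rcases Nat.eq_zero_or_pos m with rfl | hm
    · rfl
    · simp [Nat.digits_def' one_lt_two hm]
  rw [rudinShapiroCount, Nat.digits_def' one_lt_two (by omega), adjacentOnesCount_cons,
    show (2 * m + 1) / 2 = m by omega, hlow]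
  rcases Nat.mod_two_eq_zero_or_one m with h | h <;> simp [h, rudinShapiroCount]

lemma rudinShapiroCount_two_pow_add {j i : ℕ} (hi : i < 2 ^ j) :
    rudinShapiroCount (2 ^ (j + 1) + i) = rudinShapiroCount i := by
  induction j generalizing i with
  | zero =>
    obtain rfl : i = 0 := by omega
    rfl
  | succ j ih =>
    obtain ⟨m, rfl | rfl⟩ : ∃ m, i = 2 * m ∨ i = 2 * m + 1 := ⟨i / 2, by omega⟩
    · rw [show 2 ^ (j + 2) + 2 * m = 2 * (2 ^ (j + 1) + m) by ring, rudinShapiroCount_two_mul,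
        rudinShapiroCount_two_mul, ih (by omega)]
    · rw [show 2 ^ (j + 2) + (2 * m + 1) = 2 * (2 ^ (j + 1) + m) + 1 by ring,
        rudinShapiroCount_two_mul_add_one, rudinShapiroCount_two_mul_add_one, ih (by omega)]
      simp [Nat.add_mod, Nat.pow_mod]

lemma rudinShapiroCount_four_mul_add_three (m : ℕ) :
    rudinShapiroCount (4 * m + 3) = 1 + m % 2 + rudinShapiroCount m := by
  rw [show 4 * m + 3 = 2 * (2 * m + 1) + 1 by ring, rudinShapiroCount_two_mul_add_one,
    rudinShapiroCount_two_mul_add_one]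
  omega

section Words

variable {A : Type*} {ω : ℕ → A} {N k : ℕ}

lemma eventually_periodic_nat_mul (h : ∀ n, N ≤ n → ω (n + k) = ω n) (j : ℕ) :
    ∀ n, N ≤ n → ω (n + j * k) = ω n := by
  have hper : Function.Periodic (fun m => ω (N + m)) k := fun m => by
    simpa only [add_assoc] using h (N + m) (Nat.le_add_right N m)
  intro n hn
  obtain ⟨m, rfl⟩ := Nat.exists_eq_add_of_le hn
  simpa only [add_assoc, Nat.cast_id] using hper.nat_mul j m

lemma eventually_periodic_of_two_mul (hω : ∀ n, ω (2 * n) = ω n)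
    (h : ∀ n, N ≤ n → ω (n + 2 * k) = ω n) : ∀ n, N ≤ n → ω (n + k) = ω n := by
  intro n hn
  rw [← hω n, ← hω (n + k), mul_add]
  exact h (2 * n) (by omega)

theorem not_ultPeriodic_of_two_mul (hω : ∀ n, ω (2 * n) = ω n)
    (heven : ∀ N k, (∀ n, N ≤ n → ω (n + k) = ω n) → Even k) : ¬ UltPeriodic ω := by
  rintro ⟨N, k, hk, h⟩
  induction k using Nat.strong_induction_on with
  | _ k ih =>
    obtain ⟨k', rfl⟩ := heven N k h
    exact ih k' (by omega) (by omega) (eventually_periodic_of_two_mul hω (by rwa [two_mul]))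

lemma isPrefixOf_map_range (ω : ℕ → A) (n : ℕ) : IsPrefixOf ((List.range n).map ω) ω := by
  intro i hi
  simp

theorem spade_of_prefix_square {c : ℝ} (hc : 1 ≤ c) (hω : ¬ UltPeriodic ω) (L : ℕ → ℕ)
    (hpos : ∀ n, 0 < L n) (hunbdd : ∀ m, ∃ n, m < L n)
    (hrep : ∀ n, ∀ i < L n, ω (2 * L n + i) = ω i) : Spade ω c := by
  refine ⟨hω, fun _ => [], fun n => (List.range (L n)).map ω,
    fun n => (List.range (L n)).map fun i => ω (L n + i), fun n => ?_, fun n => ?_,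
    fun n => ?_, fun n => ?_, fun m => ?_⟩
  · simpa using (hpos n).ne'
  · have hsquare : [] ++ ((List.range (L n)).map ω ++
        ((List.range (L n)).map (fun i => ω (L n + i)) ++ (List.range (L n)).map ω)) =
        (List.range (L n + L n + L n)).map ω := by
      simp only [List.range_add, List.map_append, List.map_map, Function.comp_def, add_assoc,
        List.nil_append, List.append_cancel_left_eq]
      exact List.map_congr_left fun i hi => by
        rw [← add_assoc, ← two_mul, hrep n i (List.mem_range.1 hi)]
    rw [hsquare]
    exact isPrefixOf_map_range ω _
  · simpa using le_mul_of_one_le_left (Nat.cast_nonneg (L n)) hc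
  · simpa using mul_nonneg (zero_le_one.trans hc) (Nat.cast_nonneg (L n))
  · simpa using hunbdd m

end Words

section RudinShapiro

variable {A : Type*} (a b : A)

lemma rudinShapiroWord_eq_ite (n : ℕ) :
    rudinShapiroWord a b n = if rudinShapiroCount n % 2 = 0 then a else b := rfl

lemma rudinShapiroWord_eq_iff (hab : a ≠ b) {m n : ℕ} :
    rudinShapiroWord a b m = rudinShapiroWord a b n ↔
      rudinShapiroCount m % 2 = rudinShapiroCount n % 2 := by
  rw [rudinShapiroWord_eq_ite, rudinShapiroWord_eq_ite]
  split_ifs <;> simp_all [eq_comm]; omega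

lemma rudinShapiroWord_two_mul (n : ℕ) :
    rudinShapiroWord a b (2 * n) = rudinShapiroWord a b n := by
  simp only [rudinShapiroWord_eq_ite, rudinShapiroCount_two_mul]

lemma rudinShapiroWord_two_pow_add {j i : ℕ} (hi : i < 2 ^ j) :
    rudinShapiroWord a b (2 ^ (j + 1) + i) = rudinShapiroWord a b i := by
  simp only [rudinShapiroWord_eq_ite, rudinShapiroCount_two_pow_add hi]

lemma even_of_rudinShapiroWord_periodic (hab : a ≠ b) {N k : ℕ}
    (h : ∀ n, N ≤ n → rudinShapiroWord a b (n + k) = rudinShapiroWord a b n) : Even k := by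
  -- Compare the letters at `4N + 3` and `4(N + k) + 3`, then at `N` and `N + k`.
  have hfar := (rudinShapiroWord_eq_iff a b hab).1 <|
    eventually_periodic_nat_mul h 4 (4 * N + 3) (by omega)
  have hnear := (rudinShapiroWord_eq_iff a b hab).1 (h N le_rfl)
  rw [show 4 * N + 3 + 4 * k = 4 * (N + k) + 3 by ring, rudinShapiroCount_four_mul_add_three,
    rudinShapiroCount_four_mul_add_three] at hfar
  rw [Nat.even_iff]
  omega

theorem not_ultPeriodic_rudinShapiroWord (hab : a ≠ b) : ¬ UltPeriodic (rudinShapiroWord a b) :=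
  not_ultPeriodic_of_two_mul (rudinShapiroWord_two_mul a b)
    fun _ _ h => even_of_rudinShapiroWord_periodic a b hab h

end RudinShapiro

/-- **Proposition.** The Rudin–Shapiro word satisfies ♠ with constant `25`. -/
theorem rudinShapiro_spade {A : Type*} (a b : A) (hab : a ≠ b) :
    Spade (rudinShapiroWord a b) 25 :=
  spade_of_prefix_square (by norm_num) (not_ultPeriodic_rudinShapiroWord a b hab) (2 ^ ·)
    Nat.two_pow_pos (fun m => ⟨m, Nat.lt_two_pow_self⟩)
    fun n i hi => by rw [← pow_succ']; exact rudinShapiroWord_two_pow_add a b hi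
end

section
/- Let a and b be two distinct symbols. The paperfolding word on {a, b} satisfies condition ♠ with constant c = 13. -/
open scoped BigOperators

/-- The paperfolding word on the alphabet `{a, b}`: for `n ≥ 1` write `n = 2^k·m` with `m`
odd; the letter `f_n` is `a` iff `m ≡ 1 (mod 4)`. Here `paperfoldingWord a b i = f_{i+1}`. -/
def paperfoldingWord {A : Type*} (a b : A) : ℕ → A := fun i =>
  if ((i + 1) / 2 ^ (padicValNat 2 (i + 1))) % 4 = 1 then a else b

/-! The letter at a position `2 ^ j * r` with `r` odd depends only on `r % 4`. For `1 ≤ m ≤ 2 ^ n`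
the odd parts of `m` and `2 ^ (n + 2) + m` differ by a multiple of `4`, so the prefix of length
`2 ^ n` reappears at position `2 ^ (n + 2)`: take `W` empty, `|U| = 2 ^ n`, `|V| = 3 * 2 ^ n`.
A period `k = 2 ^ j * q` (`q` odd) from `N` on is also a period `2 * k`, but the positions
`2 ^ j * (4 * N + 5)` and `2 ^ j * (4 * N + 5) + 2 * k` have odd parts `1` and `3` mod `4`. -/

theorem isPrefixOf_map_range' {A : Type*} (ω : ℕ → A) (N : ℕ) :
    IsPrefixOf ((List.range' 0 N).map ω) ω :=
  fun _ _ => by simp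

theorem spade_of_prefix_repetitions {A : Type*} {ω : ℕ → A} {c : ℝ} (hω : ¬ UltPeriodic ω)
    (u d : ℕ → ℕ) (hu : ∀ n, u n ≠ 0) (hd : ∀ n, (d n : ℝ) ≤ c * u n)
    (hrep : ∀ n i, i < u n → ω (u n + d n + i) = ω i) (hunb : ∀ m, ∃ n, m < u n) :
    Spade ω c := by
  refine ⟨hω, fun _ => [], fun n => (List.range' 0 (u n)).map ω,
    fun n => (List.range' (u n) (d n)).map ω, fun n => by simpa using hu n, fun n => ?_,
    fun n => by simpa using hd n, fun n => by simpa using (Nat.cast_nonneg _).trans (hd n),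
    fun m => by simpa using hunb m⟩
  have hsecond : (List.range' 0 (u n)).map ω = (List.range' (u n + d n) (u n)).map ω :=
    List.ext_getElem (by simp) fun i hi _ => by simpa using (hrep n i (by simpa using hi)).symm
  have hrange : List.range' 0 (u n) ++ (List.range' (u n) (d n) ++
      List.range' (u n + d n) (u n)) = List.range' 0 (u n + d n + u n) := by
    rw [List.range'_append_1, Nat.add_assoc]
    simpa using List.range'_append_1 (s := 0) (m := u n) (n := d n + u n)
  beta_reduce
  rw [List.nil_append]
  nth_rw 2 [hsecond]
  rw [← List.map_append, ← List.map_append, hrange]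
  exact isPrefixOf_map_range' ω _

section Paperfolding

variable {A : Type*} (a b : A)

theorem paperfoldingWord_of_succ_eq_two_pow_mul {i j r : ℕ} (hr : Odd r) (h : i + 1 = 2 ^ j * r) :
    paperfoldingWord a b i = if r % 4 = 1 then a else b := by
  have hval : padicValNat 2 (2 ^ j * r) = j := by
    rw [padicValNat.mul (by positivity) hr.pos.ne', padicValNat.prime_pow,
      padicValNat.eq_zero_of_not_dvd hr.not_two_dvd_nat, Nat.add_zero]
  simp only [paperfoldingWord, h, hval, Nat.mul_div_cancel_left _ (Nat.two_pow_pos j)]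

theorem paperfoldingWord_two_pow_add {n i : ℕ} (hi : i < 2 ^ n) :
    paperfoldingWord a b (2 ^ (n + 2) + i) = paperfoldingWord a b i := by
  obtain ⟨v, r, hr, hvr⟩ := Nat.exists_eq_two_pow_mul_odd (Nat.add_one_ne_zero i)
  have hvn : v ≤ n := by
    refine (Nat.pow_le_pow_iff_right one_lt_two).1 ?_
    calc 2 ^ v ≤ 2 ^ v * r := Nat.le_mul_of_pos_right _ hr.pos
      _ = i + 1 := hvr.symm
      _ ≤ 2 ^ n := hi
  have hshift : 2 ^ (n + 2) + i + 1 = 2 ^ v * (r + 4 * 2 ^ (n - v)) := by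
    rw [Nat.add_assoc, hvr, mul_add, mul_left_comm, ← pow_add, Nat.add_sub_cancel' hvn, pow_add]
    ring
  have hodd : Odd (r + 4 * 2 ^ (n - v)) := hr.add_even ⟨2 * 2 ^ (n - v), by ring⟩
  rw [paperfoldingWord_of_succ_eq_two_pow_mul a b hodd hshift,
    paperfoldingWord_of_succ_eq_two_pow_mul a b hr hvr, Nat.add_mul_mod_self_left]

variable {a b}

theorem paperfoldingWord_not_ultPeriodic (hab : a ≠ b) : ¬ UltPeriodic (paperfoldingWord a b) := by
  rintro ⟨N, k, hk, hper⟩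
  obtain ⟨j, q, hq, hjq⟩ := Nat.exists_eq_two_pow_mul_odd hk.ne'
  obtain ⟨i, hi⟩ : ∃ i, i + 1 = 2 ^ j * (4 * N + 5) :=
    ⟨2 ^ j * (4 * N + 5) - 1, Nat.sub_add_cancel (Nat.one_le_iff_ne_zero.2 (by positivity))⟩
  have hNi : N ≤ i := by nlinarith [Nat.one_le_two_pow (n := j)]
  have hi2k : i + 2 * k + 1 = 2 ^ j * (4 * N + 5 + 2 * q) := by rw [hjq]; linarith
  have hperiod : paperfoldingWord a b (i + 2 * k) = paperfoldingWord a b i := by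
    rw [two_mul, ← Nat.add_assoc, hper _ (by omega), hper _ hNi]
  obtain ⟨t, rfl⟩ := hq
  rw [paperfoldingWord_of_succ_eq_two_pow_mul a b ⟨2 * N + 2 * t + 3, by ring⟩ hi2k,
    paperfoldingWord_of_succ_eq_two_pow_mul a b ⟨2 * N + 2, by ring⟩ hi] at hperiod
  simp [show (4 * N + 5 + 2 * (2 * t + 1)) % 4 = 3 by omega, hab.symm] at hperiod

end Paperfolding

/-- **Proposition.** The paperfolding word satisfies ♠ with constant `13`. -/
theorem paperfolding_spade {A : Type*} (a b : A) (hab : a ≠ b) :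
    Spade (paperfoldingWord a b) 13 := by
  refine spade_of_prefix_repetitions (paperfoldingWord_not_ultPeriodic hab) (2 ^ ·) (3 * 2 ^ ·)
    (fun _ => by positivity) (fun n => ?_) (fun n i hi => ?_) (fun m => ⟨m, Nat.lt_two_pow_self⟩)
  · push_cast
    linarith [pow_pos (two_pos (α := ℝ)) n]
  · rw [show 2 ^ n + 3 * 2 ^ n = 2 ^ (n + 2) by ring]
    exact paperfoldingWord_two_pow_add a b hi
end

section
/- Let ω be the infinite word over {0, 1} obtained by concatenating the blocks w_1 w_2 w_3 ⋯, where w_i consists of i zeros followed by i ones. Then there is no constant c ≥ 0 for which ω satisfies condition ♠, and there is no constant c ≥ 0 for which ω satisfies condition ♣. -/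
open scoped BigOperators

/-- Index `i ≥ 1` of the block `w_i = 0^i 1^i` containing position `n` (0-indexed): the
unique `i` with `(i−1)·i ≤ n < i·(i+1)`. -/
def blockIdx (n : ℕ) : ℕ :=
  if n < Nat.sqrt n * (Nat.sqrt n + 1) then Nat.sqrt n else Nat.sqrt n + 1

/-- The infinite binary word `w₁w₂w₃⋯` where `w_i` consists of `i` zeros (`false`)
followed by `i` ones (`true`); `zeroOneBlocksWord n` is its `(n+1)`-st letter. -/
def zeroOneBlocksWord (n : ℕ) : Bool :=
  blockIdx n ≤ n - (blockIdx n - 1) * blockIdx n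

namespace ZOB

lemma blockIdx_eq' {n i : ℕ} (h1 : i*(i+1) ≤ n) (h2 : n < (i+1)*(i+2)) :
    blockIdx n = i + 1 := by
  have hs1 : i ≤ Nat.sqrt n := Nat.le_sqrt.mpr (by nlinarith)
  have hs2 : Nat.sqrt n < i + 2 := by
    rw [Nat.sqrt_lt]; nlinarith
  unfold blockIdx
  rcases (by omega : Nat.sqrt n = i ∨ Nat.sqrt n = i + 1) with h | h <;> rw [h]
  · rw [if_neg (by nlinarith)]
  · rw [if_pos (by nlinarith)]

lemma blockIdx_spec (n : ℕ) :
    ∃ i, blockIdx n = i + 1 ∧ i*(i+1) ≤ n ∧ n < (i+1)*(i+2) := by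
  have hs : Nat.sqrt n * Nat.sqrt n ≤ n := Nat.sqrt_le n
  have hs' : n < (Nat.sqrt n + 1) * (Nat.sqrt n + 1) := Nat.lt_succ_sqrt n
  unfold blockIdx
  split_ifs with h
  · have h0 : 1 ≤ Nat.sqrt n := by
      rcases Nat.eq_zero_or_pos (Nat.sqrt n) with h0 | h0
      · rw [h0] at h; simp at h
      · exact h0
    refine ⟨Nat.sqrt n - 1, by omega, ?_, ?_⟩ <;> nlinarith [Nat.sub_add_cancel h0]
  · exact ⟨Nat.sqrt n, rfl, by nlinarith, by nlinarith⟩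

lemma blockIdx_le (n : ℕ) : blockIdx n ≤ Nat.sqrt n + 1 := by
  unfold blockIdx; split_ifs <;> omega

lemma word_eq {i j : ℕ} (hj : j < 2*(i+1)) :
    zeroOneBlocksWord (i*(i+1) + j) = decide (i+1 ≤ j) := by
  unfold zeroOneBlocksWord
  rw [blockIdx_eq' (Nat.le_add_right _ _) (by nlinarith)]
  simp only [Nat.add_sub_cancel_left, Nat.add_sub_cancel]


/-- Pattern `b (¬b)^k b` at position `p`. -/
def Pat (b : Bool) (p k : ℕ) : Prop :=
  zeroOneBlocksWord p = b ∧ (∀ t, 1 ≤ t → t ≤ k → zeroOneBlocksWord (p+t) = !b) ∧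
  zeroOneBlocksWord (p+k+1) = b

lemma pat_true {p k : ℕ} (hk : 1 ≤ k) (h : Pat true p k) : p + 1 = (k-1)*k := by
  obtain ⟨i, hb, h1, h2⟩ := blockIdx_spec (p+1)
  have heq : (i+1)*(i+2) = i*(i+1) + 2*(i+1) := by ring
  set j := p + 1 - i*(i+1) with hjdef
  have hrep : p + 1 = i*(i+1) + j := by omega
  have hjlt : j < 2*(i+1) := by omega
  have hv1 : zeroOneBlocksWord (p+1) = decide (i+1 ≤ j) := by
    rw [hrep]; exact word_eq hjlt
  have hfalse : zeroOneBlocksWord (p+1) = false := by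
    have := h.2.1 1 le_rfl hk; simpa using this
  have hji : j ≤ i := by rw [hfalse] at hv1; simp at hv1; omega
  have hj0 : j = 0 := by
    by_contra hj0
    have hp : p = i*(i+1) + (j-1) := by omega
    have hT := h.1
    rw [hp, word_eq (by omega)] at hT
    simp at hT; omega
  have hp1 : p + 1 = i*(i+1) := by omega
  have hki : k = i + 1 := by
    have hk1 : ¬ (k ≤ i) := by
      intro hki
      have hT := h.2.2
      have : p + k + 1 = i*(i+1) + k := by omega
      rw [this, word_eq (by omega)] at hT
      simp at hT; omega
    have hk2 : ¬ (i+2 ≤ k) := by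
      intro hki
      have hT := h.2.1 (i+2) (by omega) hki
      have : p + (i+2) = i*(i+1) + (i+1) := by omega
      rw [this, word_eq (by omega)] at hT
      simp at hT
    omega
  rw [hki]; simpa using hp1

lemma pat_false {p k : ℕ} (hk : 1 ≤ k) (h : Pat false p k) : p + 1 = (k-1)*k + k := by
  obtain ⟨i, hb, h1, h2⟩ := blockIdx_spec (p+1)
  have heq : (i+1)*(i+2) = i*(i+1) + 2*(i+1) := by ring
  set j := p + 1 - i*(i+1) with hjdef
  have hrep : p + 1 = i*(i+1) + j := by omega
  have hjlt : j < 2*(i+1) := by omega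
  have hv1 : zeroOneBlocksWord (p+1) = decide (i+1 ≤ j) := by
    rw [hrep]; exact word_eq hjlt
  have htrue : zeroOneBlocksWord (p+1) = true := by
    have := h.2.1 1 le_rfl hk; simpa using this
  have hji : i+1 ≤ j := by rw [htrue] at hv1; simp at hv1; omega
  have hj1 : j = i+1 := by
    have hp : p = i*(i+1) + (j-1) := by omega
    have hF := h.1
    rw [hp, word_eq (by omega)] at hF
    simp at hF; omega
  have hp1 : p + 1 = i*(i+1) + (i+1) := by omega
  have hki : k = i + 1 := by
    have hk1 : ¬ (k ≤ i) := by
      intro hki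
      have hF := h.2.2
      have : p + k + 1 = i*(i+1) + (i+1+k) := by omega
      rw [this, word_eq (by omega)] at hF
      simp only [decide_eq_false_iff_not] at hF; omega
    have hk2 : ¬ (i+2 ≤ k) := by
      intro hki
      have hT := h.2.1 (i+2) (by omega) hki
      have heq2 : i*(i+1) + 2*(i+1) = (i+1)*(i+2) + 0 := by ring
      have : p + (i+2) = (i+1)*(i+2) + 0 := by omega
      rw [this, word_eq (by omega)] at hT
      simp at hT
    omega
  rw [hki]
  have : (i+1-1)*(i+1) + (i+1) = i*(i+1) + (i+1) := by simp
  omega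

lemma pat_unique {b : Bool} {p q k : ℕ} (hk : 1 ≤ k)
    (hp : Pat b p k) (hq : Pat b q k) : p = q := by
  cases b
  · have := pat_false hk hp; have := pat_false hk hq; omega
  · have := pat_true hk hp; have := pat_true hk hq; omega

lemma const_le {p L : ℕ}
    (h : ∀ t, t < L → zeroOneBlocksWord (p+t) = zeroOneBlocksWord p) :
    L ≤ blockIdx p := by
  obtain ⟨i, hb, h1, h2⟩ := blockIdx_spec p
  have heq : (i+1)*(i+2) = i*(i+1) + 2*(i+1) := by ring
  set j := p - i*(i+1) with hjdef
  have hrep : p = i*(i+1) + j := by omega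
  have hjlt : j < 2*(i+1) := by omega
  have hv : zeroOneBlocksWord p = decide (i+1 ≤ j) := by
    rw [hrep]; exact word_eq hjlt
  rw [hb]
  by_contra hL
  push_neg at hL
  rcases Bool.eq_false_or_eq_true (zeroOneBlocksWord p) with hω | hω
  · have hji : i+1 ≤ j := by rw [hω] at hv; simp at hv; omega
    have ht := h (2*(i+1) - j) (by omega)
    have heq2 : i*(i+1) + 2*(i+1) = (i+1)*(i+2) + 0 := by ring
    have : p + (2*(i+1) - j) = (i+1)*(i+2) + 0 := by omega
    rw [this, word_eq (by omega), hω] at ht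
    simp at ht
  · have hji : j ≤ i := by rw [hω] at hv; simp at hv; omega
    have ht := h ((i+1) - j) (by omega)
    have : p + ((i+1) - j) = i*(i+1) + (i+1) := by omega
    rw [this, word_eq (by omega), hω] at ht
    simp at ht

end ZOB

namespace ZOB

lemma main_bound {w v m : ℕ} (u : ℕ → Bool)
    (h1 : ∀ j, j < m → zeroOneBlocksWord (w+j) = u j)
    (h2 : ∀ j k, 1 ≤ k → j + k + 1 < m →
      u j = u 0 → (∀ t, 1 ≤ t → t ≤ k → u (j+t) = ! u j) → u (j+k+1) = u j →
      ∃ q, w + m ≤ q ∧ Pat (u j) q k) :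
    m ≤ 2 * Nat.sqrt (w+m) + 2 := by
  rcases Nat.eq_zero_or_pos m with hm | hm
  · omega
  have hw0 : zeroOneBlocksWord w = u 0 := by simpa using h1 0 hm
  have sqmono1 : Nat.sqrt w ≤ Nat.sqrt (w+m) := Nat.sqrt_le_sqrt (by omega)
  by_cases hS : ∀ t, t < m → u t = u 0
  · have hc : ∀ t, t < m → zeroOneBlocksWord (w+t) = zeroOneBlocksWord w := by
      intro t ht; rw [h1 t ht, hS t ht, hw0]
    have hb := const_le (fun t ht => hc t ht)
    have hb2 := blockIdx_le w
    omega
  · push_neg at hS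
    classical
    have hex : ∃ t, t < m ∧ u t ≠ u 0 := hS
    obtain ⟨a, ham, hane, hmin⟩ :
        ∃ a, a < m ∧ u a ≠ u 0 ∧ ∀ t, t < a → u t = u 0 := by
      refine ⟨Nat.find hex, (Nat.find_spec hex).1, (Nat.find_spec hex).2, ?_⟩
      intro t ht
      by_contra hne
      exact Nat.find_min hex ht ⟨by have := (Nat.find_spec hex).1; omega, hne⟩
    have ha1 : 1 ≤ a := by
      rcases Nat.eq_zero_or_pos a with h0 | h0
      · exact absurd (h0 ▸ rfl : u a = u 0) hane
      · exact h0
    by_cases hS2 : ∀ t, a ≤ t → t < m → u t = u a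
    · -- at most two runs
      have hca : ∀ t, t < a → zeroOneBlocksWord (w+t) = zeroOneBlocksWord w := by
        intro t ht; rw [h1 t (by omega), hmin t ht, hw0]
      have hba : a ≤ blockIdx w := const_le hca
      have hwa : zeroOneBlocksWord (w+a) = u a := h1 a ham
      have hcb : ∀ t, t < m - a → zeroOneBlocksWord (w+a+t) = zeroOneBlocksWord (w+a) := by
        intro t ht
        have e : w + a + t = w + (a + t) := by omega
        rw [e, h1 (a+t) (by omega), hS2 (a+t) (by omega) (by omega), hwa]
      have hbb : m - a ≤ blockIdx (w+a) := const_le hcb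
      have hb2 := blockIdx_le w
      have hb3 := blockIdx_le (w+a)
      have sqmono2 : Nat.sqrt (w+a) ≤ Nat.sqrt (w+m) := Nat.sqrt_le_sqrt (by omega)
      omega
    · push_neg at hS2
      have hex2 : ∃ t, a ≤ t ∧ t < m ∧ u t ≠ u a := by
        obtain ⟨t, ht1, ht2, ht3⟩ := hS2; exact ⟨t, ht1, ht2, ht3⟩
      obtain ⟨t', hat, htm, htne, hmid'⟩ :
          ∃ t', a ≤ t' ∧ t' < m ∧ u t' ≠ u a ∧ ∀ s, a ≤ s → s < t' → u s = u a := by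
        refine ⟨Nat.find hex2, (Nat.find_spec hex2).1, (Nat.find_spec hex2).2.1,
          (Nat.find_spec hex2).2.2, ?_⟩
        intro s hs1 hs2
        by_contra hne
        exact Nat.find_min hex2 hs2
          ⟨hs1, by have := (Nat.find_spec hex2).2.1; omega, hne⟩
      have bool_aux : ∀ x y : Bool, x ≠ y → x = !y := by decide
      have hba : u a = !u 0 := bool_aux _ _ hane
      have ht0 : u t' = u 0 := by
        have h' := bool_aux _ _ htne
        rw [hba] at h'; simpa using h'
      have hat' : a < t' := by
        rcases Nat.lt_or_ge a t' with h | h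
        · exact h
        · exfalso
          have he : a = t' := le_antisymm hat h
          rw [← he] at htne; exact htne rfl
      have hmid : ∀ s, a ≤ s → s < t' → u s = !u 0 := by
        intro s hs1 hs2
        rw [← hba]; exact hmid' s hs1 hs2
      -- pattern parameters
      set j := a - 1 with hjdef
      set k := t' - a with hkdef
      have hk1 : 1 ≤ k := by omega
      have hjk : j + k + 1 = t' := by omega
      have huj : u j = u 0 := hmin j (by omega)
      have hint : ∀ t, 1 ≤ t → t ≤ k → u (j+t) = ! u j := by
        intro t ht1 ht2
        rw [huj]
        exact hmid (j+t) (by omega) (by omega)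
      have hlast : u (j+k+1) = u j := by rw [hjk, ht0, huj]
      obtain ⟨q, hq, hqpat⟩ := h2 j k hk1 (by omega) huj hint hlast
      have hpat1 : Pat (u j) (w+j) k := by
        refine ⟨h1 j (by omega), ?_, ?_⟩
        · intro t ht1 ht2
          have e : w + j + t = w + (j + t) := by omega
          rw [e, h1 (j+t) (by omega)]
          exact hint t ht1 ht2
        · have e : w + j + k + 1 = w + (j + k + 1) := by omega
          rw [e, h1 (j+k+1) (by omega)]
          exact hlast
      have := pat_unique hk1 hpat1 hqpat
      omega

end ZOB

namespace ZOB

lemma final_arith {c : ℝ} {w m : ℕ} (hwc : (w:ℝ) ≤ c * m)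
    (hn : 16*(⌈c⌉₊+1)+4 < m)
    (hbound : m ≤ 2 * Nat.sqrt (w+m) + 2) : False := by
  set C := ⌈c⌉₊ with hC
  have hcC : c ≤ (C : ℝ) := Nat.le_ceil c
  have hwn : w ≤ C * m := by
    have h' : (w:ℝ) ≤ (C:ℝ) * m :=
      le_trans hwc (mul_le_mul_of_nonneg_right hcC (Nat.cast_nonneg m))
    exact_mod_cast h'
  have hs : Nat.sqrt (w+m) ≤ Nat.sqrt ((C+1)*m) := Nat.sqrt_le_sqrt (by nlinarith)
  set s := Nat.sqrt ((C+1)*m) with hsdef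
  have hss : s * s ≤ (C+1)*m := Nat.sqrt_le _
  have hs1 : 1 ≤ s := by
    by_contra h0
    push_neg at h0
    interval_cases s <;> omega
  have hsles : s ≤ s * s := Nat.le_mul_of_pos_left s hs1
  have h2s : m ≤ 2*s+2 := by omega
  have hmul : m*m ≤ (2*s+2)*(2*s+2) := Nat.mul_le_mul h2s h2s
  nlinarith [hmul, hss, hsles, hn]

lemma step (A B : List Bool) (j : ℕ) (h : A.length + j < (A++B).length) :
    (A ++ B)[A.length + j] = B[j]'(by simp at h; omega) := by
  rw [List.getElem_append_right (Nat.le_add_right _ _)]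
  simp

end ZOB

/-- **Proposition (a non-example).** The word obtained by concatenating the blocks
`0^i 1^i` for `i = 1, 2, 3, …` satisfies condition ♠ for no constant `c ≥ 0` and
condition ♣ for no constant `c ≥ 0`. -/
theorem zeroOneBlocksWord_not_spade_not_club :
    (∀ c : ℝ, 0 ≤ c → ¬ Spade zeroOneBlocksWord c) ∧
    (∀ c : ℝ, 0 ≤ c → ¬ Club zeroOneBlocksWord c) := by
  constructor
  · intro c hc hsp
    obtain ⟨-, W, U, V, hne, hpre, hV, hW, hub⟩ := hsp
    obtain ⟨n, hn⟩ := hub (16*(⌈c⌉₊+1)+4)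
    set A := W n with hA
    set B := U n with hB
    set Cl := V n with hCl
    set u : ℕ → Bool := fun j => B.getD j false with hu
    have huval : ∀ (j : ℕ) (hj : j < B.length), B[j] = u j := by
      intro j hj; exact (List.getD_eq_getElem _ _ hj).symm
    have hlen : (A ++ (B ++ (Cl ++ B))).length
        = A.length + (B.length + (Cl.length + B.length)) := by simp
    have h1 : ∀ j, j < B.length → zeroOneBlocksWord (A.length + j) = u j := by
      intro j hj
      have hi : A.length + j < (A ++ (B ++ (Cl ++ B))).length := by omega
      have h := hpre n (A.length + j) hi
      rw [List.get_eq_getElem] at h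
      rw [← h, ZOB.step, List.getElem_append_left hj]
      exact huval j hj
    have h1' : ∀ j, j < B.length →
        zeroOneBlocksWord (A.length + (B.length + (Cl.length + j))) = u j := by
      intro j hj
      have hi : A.length + (B.length + (Cl.length + j))
          < (A ++ (B ++ (Cl ++ B))).length := by omega
      have h := hpre n _ hi
      rw [List.get_eq_getElem] at h
      rw [← h, ZOB.step, ZOB.step, ZOB.step]
      exact huval j hj
    have hbound := ZOB.main_bound (w := A.length) (v := Cl.length) (m := B.length) u h1 ?_
    · exact ZOB.final_arith (hW n) hn hbound
    · intro j k hk1 hjk hj0 hint hlast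
      refine ⟨A.length + (B.length + (Cl.length + j)), by omega, ?_, ?_, ?_⟩
      · exact h1' j (by omega)
      · intro t ht1 ht2
        have e : A.length + (B.length + (Cl.length + j)) + t
            = A.length + (B.length + (Cl.length + (j+t))) := by omega
        rw [e, h1' (j+t) (by omega)]
        exact hint t ht1 ht2
      · have e : A.length + (B.length + (Cl.length + j)) + k + 1
            = A.length + (B.length + (Cl.length + (j+k+1))) := by omega
        rw [e, h1' (j+k+1) (by omega)]
        exact hlast
  · intro c hc hsp
    obtain ⟨-, W, U, V, hne, hpre, hV, hW, hub⟩ := hsp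
    obtain ⟨n, hn⟩ := hub (16*(⌈c⌉₊+1)+4)
    set A := W n with hA
    set B := U n with hB
    set Cl := V n with hCl
    set u : ℕ → Bool := fun j => B.getD j false with hu
    have huval : ∀ (j : ℕ) (hj : j < B.length), B[j] = u j := by
      intro j hj; exact (List.getD_eq_getElem _ _ hj).symm
    have hlen : (A ++ (B ++ (Cl ++ B.reverse))).length
        = A.length + (B.length + (Cl.length + B.length)) := by simp
    have h1 : ∀ j, j < B.length → zeroOneBlocksWord (A.length + j) = u j := by
      intro j hj
      have hi : A.length + j < (A ++ (B ++ (Cl ++ B.reverse))).length := by omega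
      have h := hpre n (A.length + j) hi
      rw [List.get_eq_getElem] at h
      rw [← h, ZOB.step, List.getElem_append_left hj]
      exact huval j hj
    have h1' : ∀ j, j < B.length →
        zeroOneBlocksWord (A.length + (B.length + (Cl.length + j)))
          = u (B.length - 1 - j) := by
      intro j hj
      have hi : A.length + (B.length + (Cl.length + j))
          < (A ++ (B ++ (Cl ++ B.reverse))).length := by
        rw [hlen]; omega
      have h := hpre n _ hi
      rw [List.get_eq_getElem] at h
      rw [← h]
      rw [ZOB.step, ZOB.step, ZOB.step]
      simp only [List.getElem_reverse]
      exact huval (B.length - 1 - j) (by omega)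
    have hbound := ZOB.main_bound (w := A.length) (v := Cl.length) (m := B.length) u h1 ?_
    · exact ZOB.final_arith (hW n) hn hbound
    · intro j k hk1 hjk hj0 hint hlast
      set r := B.length - 1 - (j+k+1) with hr
      refine ⟨A.length + (B.length + (Cl.length + r)), by omega, ?_, ?_, ?_⟩
      · rw [h1' r (by omega)]
        have e : B.length - 1 - r = j + k + 1 := by omega
        rw [e]
        exact hlast
      · intro t ht1 ht2
        have e : A.length + (B.length + (Cl.length + r)) + t
            = A.length + (B.length + (Cl.length + (r+t))) := by omega
        rw [e, h1' (r+t) (by omega)]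
        have e2 : B.length - 1 - (r+t) = j + (k+1-t) := by omega
        rw [e2]
        exact hint (k+1-t) (by omega) (by omega)
      · have e : A.length + (B.length + (Cl.length + r)) + k + 1
            = A.length + (B.length + (Cl.length + (r+(k+1)))) := by omega
        rw [e, h1' (r+(k+1)) (by omega)]
        have e2 : B.length - 1 - (r+(k+1)) = j := by omega
        rw [e2]
end
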